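/- If X is a metric space and Y ⊇ X is an injective metric space containing X, then ae(X) = ν(X,Y). In particular, ae(X) = ν(X, E(X)) where E(X) is the injective hull of X. -/
import Mathlib


noncomputable section

/-- The Lipschitz constant of a map (infimum of admissible constants). -/
def lipConst {α β : Type*} [PseudoEMetricSpace α] [PseudoEMetricSpace β] (f : α → β) : NNReal :=
  sInf {K : NNReal | LipschitzWith K f}

/-- The absolute extendability constant `ae(X)`: the least `K ≥ 0` such that for every
metric space `Y` containing `X` (isometrically), every Banach space `E`, and every
Lipschitz map `f : X → E`, the map `f` admits a `K·Lip(f)`-Lipschitz extension to `Y`. -/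
def aeConst (X : Type) [MetricSpace X] : ℝ :=
  sInf {K : ℝ | 0 ≤ K ∧ ∀ (Y : Type) [MetricSpace Y] (ι : X → Y), Isometry ι →
    ∀ (E : Type) [NormedAddCommGroup E] [NormedSpace ℝ E] [CompleteSpace E] (f : X → E),
      (∃ L, LipschitzWith L f) →
      ∃ g : Y → E, (∀ x : X, g (ι x) = f x) ∧ LipschitzWith (K.toNNReal * lipConst f) g}

/-- The non-linear extension modulus `ν(X,Y)` for a subset `X ⊆ Y`: the least `K ≥ 0`
such that every Lipschitz map from `X` into any Banach space admits a `K·Lip(f)`-Lipschitz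
extension to `Y`. -/
def nuMod (Y : Type) [MetricSpace Y] (X : Set Y) : ℝ :=
  sInf {K : ℝ | 0 ≤ K ∧ ∀ (E : Type) [NormedAddCommGroup E] [NormedSpace ℝ E]
    [CompleteSpace E] (f : ↥X → E), (∃ L, LipschitzWith L f) →
    ∃ g : Y → E, (∀ x : ↥X, g ↑x = f x) ∧ LipschitzWith (K.toNNReal * lipConst f) g}

end

/-- A metric space is injective (an absolute 1-Lipschitz retract / hyperconvex space)
if every 1-Lipschitz map into it from a subset of any metric space extends to a
1-Lipschitz map on the whole space. -/
def IsInjectiveMetricSpace (Z : Type) [MetricSpace Z] : Prop :=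
  ∀ (A : Type) [MetricSpace A] (B : Set A) (f : ↥B → Z), LipschitzWith 1 f →
    ∃ g : A → Z, LipschitzWith 1 g ∧ ∀ b : ↥B, g ↑b = f b

/-- if `Y` is an injective metric space and `X ⊆ Y`, then
`ae(X) = ν(X,Y)`.  (In particular, `ae(X) = ν(X, E(X))` for the injective hull
`E(X)`, which is an injective metric space containing `X`.) -/
theorem aeConst_eq_nu_of_injective (Y : Type) [MetricSpace Y]
    (hY : IsInjectiveMetricSpace Y) (X : Set Y) :
    aeConst ↥X = nuMod Y X := by
  unfold aeConst nuMod
  congr 1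
  ext K
  constructor
  · rintro ⟨hK, h⟩
    exact ⟨hK, fun E _ _ _ f hf => h Y Subtype.val isometry_subtype_coe E f hf⟩
  · rintro ⟨hK, h⟩
    refine ⟨hK, fun Y' _ ι hι E _ _ _ f hf => ?_⟩
    by_cases hne : Nonempty ↥X
    case neg =>
      exact ⟨fun _ => 0, fun x => (hne ⟨x⟩).elim, LipschitzWith.const' 0⟩
    haveI := hne
    obtain ⟨g, hg, hgl⟩ := h E f hf
    have hinj : Function.Injective ι := hι.injective
    have key : ∀ b : ↥(Set.range ι), ι (Function.invFun ι (b : Y')) = (b : Y') :=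
      fun b => Function.invFun_eq b.2
    have φlip : LipschitzWith 1
        (fun b : ↥(Set.range ι) => ((Function.invFun ι (b : Y') : ↥X) : Y)) := by
      apply LipschitzWith.of_edist_le
      intro b1 b2
      have e1 : edist ((Function.invFun ι (b1 : Y') : ↥X) : Y)
          ((Function.invFun ι (b2 : Y') : ↥X) : Y)
          = edist (ι (Function.invFun ι (b1 : Y'))) (ι (Function.invFun ι (b2 : Y'))) := by
        rw [hι.edist_eq]; rfl
      rw [e1, key b1, key b2]
      rfl
    obtain ⟨r, hr1, hr2⟩ := hY Y' (Set.range ι) _ φlip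
    refine ⟨g ∘ r, ?_, ?_⟩
    · intro x
      have h1 : r (ι x) = ((Function.invFun ι (ι x) : ↥X) : Y) := hr2 ⟨ι x, x, rfl⟩
      have h2 : Function.invFun ι (ι x) = x := Function.leftInverse_invFun hinj x
      simp only [Function.comp_apply, h1, h2]
      exact hg x
    · have := hgl.comp hr1
      simpa using this
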